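/- Let A be an associative ℂ-algebra with unit, n ≥ 1, and write [a,b] = ab - ba. Suppose given elements b^L_{ij}, X_{ij}, Y_{ij} ∈ A (1 ≤ i,j ≤ n) with b^L_{ij} = b^L_{ji}, and an invertible element C ∈ A, such that: [X_{ij},X_{kl}] = 0, [Y_{ij},Y_{kl}] = 0, [X_{ij},Y_{kl}] = δ_{ik}δ_{jl}C, C commutes with all listed elements, [b^L_{ij}, Y_{kl}] = 0, and [b^L_{ij}, X_{kl}] = δ_{jk}Y_{il} + δ_{ik}Y_{jl}. Then the elements b̂^L_{ij} := b^L_{ij} + C^{-1}·Σ_{m=1}^{n} Y_{jm}Y_{im} satisfy [b̂^L_{ij}, X_{kl}] = 0 and [b̂^L_{ij}, Y_{kl}] = 0 for all i,j,k,l. -/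

import Mathlib

/-!
The `Y`'s commute with each other and with `b`, and `C⁻¹` is central, so `b̂_{ij}` commutes with
every `Y_{kl}`. Against `X_{kl}`, the Leibniz rule and the Heisenberg relation give
`[Σ_m Y_{jm} Y_{im}, X_{kl}] = -C (δ_{jk} Y_{il} + δ_{ik} Y_{jl})`; multiplied by `C⁻¹` this
cancels `[b_{ij}, X_{kl}]` exactly.
-/

section Commutator

variable {R : Type*} [Ring R]

attribute [local instance] LieRing.ofAssociativeRing

theorem Commute.inv_left_of_mul_eq_one {c c' z : R} (h : c * c' = 1) (h' : c' * c = 1)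
    (hz : Commute c z) : Commute c' z :=
  Commute.units_inv_left (u := ⟨c, c', h, h'⟩) hz

theorem Ring.mul_lie (a b x : R) : ⁅a * b, x⁆ = a * ⁅b, x⁆ + ⁅a, x⁆ * b := by
  simp only [Ring.lie_def]
  noncomm_ring

theorem Commute.mul_lie {c x : R} (h : Commute c x) (s : R) : ⁅c * s, x⁆ = c * ⁅s, x⁆ := by
  rw [Ring.mul_lie, commute_iff_lie_eq.mp h, zero_mul, add_zero]

variable {ι κ : Type*} [Fintype κ] {b : ι → ι → R} {X Y : ι → κ → R} {C Cinv : R}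

theorem commute_add_inv_mul_sum_mul
    (hYY : ∀ i j k l, Commute (Y i j) (Y k l)) (hCinvY : ∀ i j, Commute Cinv (Y i j))
    (hbY : ∀ i j k l, Commute (b i j) (Y k l)) (i j k : ι) (l : κ) :
    Commute (b i j + Cinv * ∑ m, Y j m * Y i m) (Y k l) :=
  (hbY i j k l).add_left <| (hCinvY k l).mul_left <|
    Commute.sum_left _ _ _ fun m _ => (hYY j m k l).mul_left (hYY i m k l)

variable [DecidableEq ι] [DecidableEq κ]

theorem lie_sum_mul_of_heisenberg
    (hXY : ∀ i j k l, ⁅X i j, Y k l⁆ = if i = k ∧ j = l then C else 0)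
    (hCY : ∀ i j, Commute C (Y i j)) (i j k : ι) (l : κ) :
    ⁅∑ m, Y j m * Y i m, X k l⁆
      = -(C * ((if j = k then Y i l else 0) + (if i = k then Y j l else 0))) := by
  have hYX : ∀ i m, ⁅Y i m, X k l⁆ = -(if k = i ∧ l = m then C else 0) := fun i m => by
    rw [← lie_skew, hXY]
  simp only [sum_lie, Ring.mul_lie, hYX]
  simp only [eq_comm, ite_and, mul_neg, mul_ite, mul_zero, neg_mul, ite_mul, (hCY _ _).eq,
    zero_mul, Finset.sum_add_distrib, Finset.sum_neg_distrib, Finset.sum_ite_irrel,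
    Finset.sum_ite_eq, Finset.mem_univ, ↓reduceIte, Finset.sum_const_zero]
  split_ifs <;> simp [mul_add, (hCY _ _).eq, add_comm]

theorem lie_add_inv_mul_sum_mul_of_heisenberg
    (hC : C * Cinv = 1) (hC' : Cinv * C = 1)
    (hXY : ∀ i j k l, ⁅X i j, Y k l⁆ = if i = k ∧ j = l then C else 0)
    (hCX : ∀ i j, Commute C (X i j)) (hCY : ∀ i j, Commute C (Y i j))
    (hbX : ∀ i j k l, ⁅b i j, X k l⁆ = (if j = k then Y i l else 0) + (if i = k then Y j l else 0))
    (i j k : ι) (l : κ) :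
    ⁅b i j + Cinv * ∑ m, Y j m * Y i m, X k l⁆ = 0 := by
  rw [add_lie, ((hCX k l).inv_left_of_mul_eq_one hC hC').mul_lie,
    lie_sum_mul_of_heisenberg hXY hCY, hbX, mul_neg, ← mul_assoc, hC', one_mul, add_neg_cancel]

end Commutator

theorem stmt_6_general {A : Type*} [Ring A] (n : ℕ)
    (b X Y : Fin n → Fin n → A) (C Cinv : A)
    (hC : C * Cinv = 1) (hC' : Cinv * C = 1)
    (hYY : ∀ i j k l, Y i j * Y k l - Y k l * Y i j = 0)
    (hXY : ∀ i j k l, X i j * Y k l - Y k l * X i j = if i = k ∧ j = l then C else 0)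
    (hCX : ∀ i j, C * X i j - X i j * C = 0)
    (hCY : ∀ i j, C * Y i j - Y i j * C = 0)
    (hbY : ∀ i j k l, b i j * Y k l - Y k l * b i j = 0)
    (hbX : ∀ i j k l, b i j * X k l - X k l * b i j
      = (if j = k then Y i l else 0) + (if i = k then Y j l else 0)) :
    ∀ i j k l,
      ((b i j + Cinv * ∑ m, Y j m * Y i m) * X k l
          - X k l * (b i j + Cinv * ∑ m, Y j m * Y i m) = 0) ∧
      ((b i j + Cinv * ∑ m, Y j m * Y i m) * Y k l
          - Y k l * (b i j + Cinv * ∑ m, Y j m * Y i m) = 0) := by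
  have hCX' : ∀ i j, Commute C (X i j) := fun i j => sub_eq_zero.mp (hCX i j)
  have hCY' : ∀ i j, Commute C (Y i j) := fun i j => sub_eq_zero.mp (hCY i j)
  have hCinvY : ∀ i j, Commute Cinv (Y i j) := fun i j =>
    (hCY' i j).inv_left_of_mul_eq_one hC hC'
  intro i j k l
  exact ⟨lie_add_inv_mul_sum_mul_of_heisenberg hC hC' hXY hCX' hCY' hbX i j k l,
    sub_eq_zero.mpr <| commute_add_inv_mul_sum_mul (fun i j k l => sub_eq_zero.mp (hYY i j k l))
      hCinvY (fun i j k l => sub_eq_zero.mp (hbY i j k l)) i j k l⟩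

/-- In an associative ℂ-algebra with Heisenberg generators `X_{ij}, Y_{ij}, C`
(`C` invertible, central) and symmetric generators `b^L_{ij}` with `[b^L_{ij}, Y_{kl}] = 0`,
`[b^L_{ij}, X_{kl}] = δ_{jk}Y_{il} + δ_{ik}Y_{jl}`, the shifted generators
`b̂^L_{ij} = b^L_{ij} + C⁻¹ Σ_m Y_{jm} Y_{im}` commute with all `X_{kl}`, `Y_{kl}`. -/
theorem stmt_6 {A : Type*} [Ring A] [Algebra ℂ A] (n : ℕ) (hn : 1 ≤ n)
    (b X Y : Fin n → Fin n → A) (C Cinv : A)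
    (hbsym : ∀ i j, b i j = b j i)
    (hC : C * Cinv = 1) (hC' : Cinv * C = 1)
    (hXX : ∀ i j k l, X i j * X k l - X k l * X i j = 0)
    (hYY : ∀ i j k l, Y i j * Y k l - Y k l * Y i j = 0)
    (hXY : ∀ i j k l, X i j * Y k l - Y k l * X i j = if i = k ∧ j = l then C else 0)
    (hCX : ∀ i j, C * X i j - X i j * C = 0)
    (hCY : ∀ i j, C * Y i j - Y i j * C = 0)
    (hCb : ∀ i j, C * b i j - b i j * C = 0)
    (hbY : ∀ i j k l, b i j * Y k l - Y k l * b i j = 0)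
    (hbX : ∀ i j k l, b i j * X k l - X k l * b i j
      = (if j = k then Y i l else 0) + (if i = k then Y j l else 0)) :
    ∀ i j k l,
      ((b i j + Cinv * ∑ m, Y j m * Y i m) * X k l
          - X k l * (b i j + Cinv * ∑ m, Y j m * Y i m) = 0) ∧
      ((b i j + Cinv * ∑ m, Y j m * Y i m) * Y k l
          - Y k l * (b i j + Cinv * ∑ m, Y j m * Y i m) = 0) :=
  stmt_6_general n b X Y C Cinv hC hC' hYY hXY hCX hCY hbY hbX
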